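/- arXiv:1505.01961 — 3 statements merged into one kernel-verified Lean document; each statement's English description precedes it below -/
import Mathlib

section
/- Let I = (i_0, i_1, ...) be an eventually-zero sequence of nonnegative integers with i_0 = 2. Then the shifted sequence r(I) = (i_1, i_2, ...) is the frame of some Dyck path if and only if I is the frame of some Dyck path. -/
/-- A step of a Dyck path: `true` = up step (1,1), `false` = down step (1,-1). -/
def dstep (b : Bool) : ℤ := if b then 1 else -1

/-- Height of the path after its first `k` steps. -/
def dheight (p : List Bool) (k : ℕ) : ℤ := ((p.take k).map dstep).sum

/-- A Dyck path: ends at height 0 and never goes below the x-axis. -/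
def IsDyck (p : List Bool) : Prop :=
  (p.map dstep).sum = 0 ∧ ∀ k, 0 ≤ dheight p k

/-- Number of lattice points of the path at level `l` (its "feet" at level `l`). -/
def feet (p : List Bool) (l : ℤ) : ℕ :=
  ((List.range (p.length + 1)).map (dheight p)).count l

/-- The frame of a Dyck path: at position `k`, the number of its points at height `k`. -/
def frame (p : List Bool) : ℕ → ℕ := fun k => feet p (k : ℤ)

/-- `DyckFeet m l j` = number of Dyck paths of length `m` with exactly `j` points at level `l`. -/
noncomputable def DyckFeet (m : ℕ) (l : ℤ) (j : ℕ) : ℕ :=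
  Set.ncard {p : List Bool | p.length = m ∧ IsDyck p ∧ feet p l = j}

/-- A sequence is admissible if it is the frame of some Dyck path. -/
def Admissible (I : ℕ → ℕ) : Prop := ∃ p : List Bool, IsDyck p ∧ frame p = I

/-!
Every nonempty Dyck path starts with an up step and ends with a down step, so it is
`U q D = nest q` for a path `q` of total height `0` that never drops below `-1`. The points of
`U q D` at height `k + 1` are those of `q` at height `k`, and its points at height `0` are its two
endpoints together with the points of `q` at height `-1`. Hence `U q D` has frame `(2, frame q)`
when `q` is a Dyck path, and conversely a leading entry `2` says that `q` never touches `-1`,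
i.e. that `q` is a Dyck path.
-/

def nest (q : List Bool) : List Bool := true :: (q ++ [false])

lemma dheight_of_length_le (p : List Bool) {k : ℕ} (h : p.length ≤ k) :
    dheight p k = (p.map dstep).sum := by
  rw [dheight, List.take_of_length_le h]

lemma dheight_cons_succ (b : Bool) (p : List Bool) (k : ℕ) :
    dheight (b :: p) (k + 1) = dstep b + dheight p k := by
  simp [dheight, List.take_succ_cons]

lemma dheight_append_of_le_length (p s : List Bool) {k : ℕ} (h : k ≤ p.length) :
    dheight (p ++ s) k = dheight p k := by
  rw [dheight, List.take_append_of_le_length h, dheight]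

lemma sum_map_dstep_nest (q : List Bool) :
    ((nest q).map dstep).sum = (q.map dstep).sum := by
  simp [nest, dstep]

lemma dheight_nest_succ (q : List Bool) {k : ℕ} (hk : k ≤ q.length) :
    dheight (nest q) (k + 1) = 1 + dheight q k := by
  rw [nest, dheight_cons_succ, dheight_append_of_le_length _ _ hk, dstep, if_pos rfl]

lemma map_dheight_range_nest (q : List Bool) (hs : (q.map dstep).sum = 0) :
    (List.range ((nest q).length + 1)).map (dheight (nest q)) =
      0 :: ((List.range (q.length + 1)).map (dheight q)).map (· + 1) ++ [0] := by
  have hlen : (nest q).length + 1 = q.length + 1 + 1 + 1 := by simp [nest]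
  have hend : dheight (nest q) (q.length + 1 + 1) = 0 := by
    rw [dheight_of_length_le _ (by simp [nest]), sum_map_dstep_nest, hs]
  rw [hlen, List.range_succ_eq_map, List.range_succ]
  simp only [List.map_cons, List.map_append, List.map_map, List.map_nil, List.cons_append,
    Nat.succ_eq_add_one, hend]
  congr 2
  refine List.map_congr_left fun k hk => ?_
  rw [Function.comp_apply, Function.comp_apply, Nat.succ_eq_add_one,
    dheight_nest_succ q (Nat.lt_succ_iff.mp (List.mem_range.mp hk)), add_comm]

lemma feet_nest (q : List Bool) (hs : (q.map dstep).sum = 0) (l : ℤ) :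
    feet (nest q) (l + 1) = feet q l + if l = -1 then 2 else 0 := by
  rw [feet, map_dheight_range_nest q hs, feet, List.cons_append, List.count_cons, List.count_append,
    List.count_map_of_injective _ (· + 1) (add_left_injective 1), List.count_singleton]
  simp only [beq_iff_eq]
  split_ifs <;> omega

lemma frame_nest_zero (q : List Bool) (hs : (q.map dstep).sum = 0) :
    frame (nest q) 0 = feet q (-1) + 2 := by
  simpa [frame] using feet_nest q hs (-1)

lemma frame_nest_succ (q : List Bool) (hs : (q.map dstep).sum = 0) (k : ℕ) :
    frame (nest q) (k + 1) = frame q k := by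
  simpa [frame] using feet_nest q hs k

lemma IsDyck.feet_neg_one {q : List Bool} (hq : IsDyck q) : feet q (-1) = 0 := by
  rw [feet, List.count_eq_zero]
  intro hmem
  obtain ⟨k, -, hk⟩ := List.mem_map.mp hmem
  have := hq.2 k
  omega

lemma isDyck_nest {q : List Bool} (hq : IsDyck q) : IsDyck (nest q) := by
  refine ⟨by rw [sum_map_dstep_nest, hq.1], fun k => ?_⟩
  rcases k with _ | k
  · exact le_rfl
  rcases le_or_gt k q.length with hk | hk
  · rw [dheight_nest_succ q hk]; linarith [hq.2 k]
  · rw [dheight_of_length_le _ (by simp [nest]; omega), sum_map_dstep_nest, hq.1]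

lemma isDyck_of_isDyck_nest {q : List Bool} (hq : IsDyck (nest q)) (hneg : feet q (-1) = 0) :
    IsDyck q := by
  have hs : (q.map dstep).sum = 0 := by rw [← sum_map_dstep_nest, hq.1]
  refine ⟨hs, fun k => ?_⟩
  rcases le_or_gt k q.length with hk | hk
  · have hne : dheight q k ≠ -1 := fun h => by
      rw [feet, List.count_eq_zero] at hneg
      exact hneg (h ▸ List.mem_map_of_mem (List.mem_range.mpr (by omega)))
    have := hq.2 (k + 1)
    rw [dheight_nest_succ q hk] at this
    omega
  · rw [dheight_of_length_le _ hk.le, hs]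

lemma IsDyck.exists_eq_nest {p : List Bool} (hp : IsDyck p) (hne : p ≠ []) :
    ∃ q, p = nest q := by
  obtain ⟨a, t, rfl⟩ := List.exists_cons_of_ne_nil hne
  have ha : a = true := by
    have := hp.2 1
    cases a <;> simp_all [dheight, dstep]
  subst ha
  rcases List.eq_nil_or_concat t with rfl | ⟨q, b, rfl⟩
  · simp [IsDyck, dstep] at hp
  have hb : b = false := by
    have := hp.2 (q.length + 1)
    cases b
    · rfl
    · simp_all [IsDyck, dheight, dstep]
      omega
  exact ⟨q, by rw [hb, nest, List.concat_eq_append]⟩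

theorem stmt9_general (I : ℕ → ℕ) (h0 : I 0 = 2) :
    Admissible (fun k => I (k + 1)) ↔ Admissible I := by
  constructor
  · rintro ⟨q, hq, hqI⟩
    refine ⟨nest q, isDyck_nest hq, funext fun k => ?_⟩
    rcases k with _ | k
    · rw [frame_nest_zero q hq.1, IsDyck.feet_neg_one hq, h0]
    · rw [frame_nest_succ q hq.1, hqI]
  · rintro ⟨p, hp, hpI⟩
    have hne : p ≠ [] := by
      rintro rfl
      simpa [frame, feet, dheight, h0] using congrFun hpI 0
    obtain ⟨q, rfl⟩ := IsDyck.exists_eq_nest hp hne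
    have hs : (q.map dstep).sum = 0 := by rw [← sum_map_dstep_nest, hp.1]
    have hneg : feet q (-1) = 0 := by
      have := frame_nest_zero q hs
      rw [hpI, h0] at this
      omega
    refine ⟨q, isDyck_of_isDyck_nest hp hneg, funext fun k => ?_⟩
    rw [← frame_nest_succ q hs, hpI]

/-- If the first entry of an eventually zero sequence is 2, removing it preserves admissibility
in both directions. -/
theorem stmt9 (I : ℕ → ℕ) (hz : ∃ N, ∀ k ≥ N, I k = 0) (h0 : I 0 = 2) :
    Admissible (fun k => I (k + 1)) ↔ Admissible I :=
  stmt9_general I h0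
end

section
/- If (i_0, i_1, ..., i_f, 0, ...) is the frame of a Dyck path with last nonzero entry i_f and f ≥ 1, then i_{f-1} > i_f. -/
/-
The first point of the path at the maximal height `f` is reached by an up step from height `f - 1`,
and every point at height `f` is an interior point followed by a down step to height `f - 1`.
So `k ↦ k + 1` maps the points at height `f` injectively to points at height `f - 1`, and it misses
the predecessor of the first point at height `f`.
-/

lemma dstep_eq_one_or_neg_one (b : Bool) : dstep b = 1 ∨ dstep b = -1 := by
  cases b <;> simp [dstep]

lemma dheight_zero (p : List Bool) : dheight p 0 = 0 := rfl

lemma dheight_length (p : List Bool) : dheight p p.length = (p.map dstep).sum := by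
  rw [dheight, List.take_length]

lemma dheight_succ (p : List Bool) {k : ℕ} (hk : k < p.length) :
    dheight p (k + 1) = dheight p k + dstep p[k] := by
  rw [dheight, dheight, List.take_add_one, List.getElem?_eq_getElem hk, List.map_append,
    List.sum_append, Option.toList_some, List.map_singleton, List.sum_singleton]

def levelPoints (p : List Bool) (l : ℤ) : Finset ℕ :=
  (Finset.range (p.length + 1)).filter (fun k => dheight p k = l)

@[simp]
lemma mem_levelPoints {p : List Bool} {l : ℤ} {k : ℕ} :
    k ∈ levelPoints p l ↔ k ≤ p.length ∧ dheight p k = l := by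
  simp [levelPoints]

lemma feet_eq_card_levelPoints (p : List Bool) (l : ℤ) : feet p l = (levelPoints p l).card := by
  rw [feet, List.count_eq_countP, List.countP_map, List.countP_eq_length_filter]
  rfl

section MaxHeight

variable {p : List Bool} {l : ℤ}

lemma dheight_succ_eq_sub_one_of_eq_max (hmax : ∀ k ≤ p.length, dheight p k ≤ l) {k : ℕ}
    (hk : k < p.length) (h : dheight p k = l) :
    dheight p (k + 1) = l - 1 := by
  have hle := hmax (k + 1) hk
  rw [dheight_succ p hk] at hle ⊢
  rcases dstep_eq_one_or_neg_one p[k] with hs | hs <;> rw [hs] at hle ⊢ <;> omega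

lemma dheight_eq_sub_one_of_succ_eq_max (hmax : ∀ k ≤ p.length, dheight p k ≤ l) {k : ℕ}
    (hk : k < p.length) (h : dheight p (k + 1) = l) :
    dheight p k = l - 1 := by
  have hle := hmax k hk.le
  rw [dheight_succ p hk] at h
  rcases dstep_eq_one_or_neg_one p[k] with hs | hs <;> rw [hs] at h <;> omega

theorem feet_lt_feet_sub_one_of_max (hmax : ∀ k ≤ p.length, dheight p k ≤ l) (hl0 : l ≠ 0)
    (hend : dheight p p.length ≠ l) (hl : feet p l ≠ 0) : feet p l < feet p (l - 1) := by
  simp only [feet_eq_card_levelPoints] at hl ⊢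
  set A := levelPoints p l
  have hinterior : ∀ k ∈ A, 0 < k ∧ k < p.length := by
    intro k hk
    rw [mem_levelPoints] at hk
    refine ⟨Nat.pos_of_ne_zero ?_, lt_of_le_of_ne hk.1 ?_⟩ <;> rintro rfl
    · exact hl0 (hk.2.symm.trans (dheight_zero p))
    · exact hend hk.2
  have hne : A.Nonempty := Finset.card_ne_zero.mp hl
  set k₀ := A.min' hne
  have hk₀ : k₀ ∈ A := A.min'_mem hne
  have hk₀_interior := hinterior k₀ hk₀
  have hpred : k₀ - 1 ∉ A.image (· + 1) := by
    simp only [Finset.mem_image, not_exists, not_and]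
    intro k hk hkk₀
    have := A.min'_le k hk
    omega
  have hsub : insert (k₀ - 1) (A.image (· + 1)) ⊆ levelPoints p (l - 1) := by
    intro k hk
    rw [Finset.mem_insert, Finset.mem_image] at hk
    rcases hk with rfl | ⟨j, hj, rfl⟩
    · refine mem_levelPoints.mpr
        ⟨by omega, dheight_eq_sub_one_of_succ_eq_max hmax (by omega) ?_⟩
      rw [Nat.sub_add_cancel hk₀_interior.1]
      exact (mem_levelPoints.mp hk₀).2
    · have hj' := hinterior j hj
      exact mem_levelPoints.mpr ⟨hj'.2, dheight_succ_eq_sub_one_of_eq_max hmax hj'.2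
        (mem_levelPoints.mp hj).2⟩
  calc A.card = (A.image (· + 1)).card :=
        (Finset.card_image_of_injective _ (add_left_injective 1)).symm
    _ < (insert (k₀ - 1) (A.image (· + 1))).card := by
      rw [Finset.card_insert_of_notMem hpred]; omega
    _ ≤ (levelPoints p (l - 1)).card := Finset.card_le_card hsub

end MaxHeight

lemma dheight_le_of_frame_eq_zero {p : List Bool} (hnonneg : ∀ k, 0 ≤ dheight p k) {f : ℕ}
    (hz : ∀ k > f, frame p k = 0) {k : ℕ} (hk : k ≤ p.length) : dheight p k ≤ f := by
  by_contra! hgt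
  have hzero := hz (dheight p k).toNat (by omega)
  rw [frame, Int.toNat_of_nonneg (hnonneg k), feet_eq_card_levelPoints,
    Finset.card_eq_zero] at hzero
  exact Finset.notMem_empty k (hzero ▸ mem_levelPoints.mpr ⟨hk, rfl⟩)

/-- If f ≥ 1 is the maximal height of a Dyck path, then the frame satisfies i_{f-1} > i_f. -/
theorem stmt12 (p : List Bool) (hp : IsDyck p) (f : ℕ) (hf1 : 1 ≤ f)
    (hf : frame p f ≠ 0) (hz : ∀ k > f, frame p k = 0) :
    frame p f < frame p (f - 1) := by
  have hmax : ∀ k ≤ p.length, dheight p k ≤ f := fun _ hk =>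
    dheight_le_of_frame_eq_zero hp.2 hz hk
  have hend : dheight p p.length = 0 := (dheight_length p).trans hp.1
  have hlt := feet_lt_feet_sub_one_of_max hmax (by omega) (by omega) hf
  simpa only [frame, Nat.cast_sub hf1, Nat.cast_one] using hlt
end

section
/- Let X be the admissible frame (2+n, a, b, ...) with n ≥ 0, and let Y = (2, a-n, b, ...) be its right progenitor, with k the number of Dyck paths having frame Y. Then the number of Dyck paths with frame X equals k · C(a-1, a-n-1). -/
/-! A Dyck path is a concatenation of arches `U q D` and is determined by the list of the
interior paths `q`. It has one more point at height `0` than it has arches, and its frame at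
height `j + 1` is the sum of the frames of the interiors at height `j`. Hence a path of frame
`X = (2+n, a, b, …)` amounts to a list of `n + 1` Dyck paths whose frames add up to `(a, b, …)`,
and a path of frame `Y` is a single arch around a path `Q` of frame `(a-n, b, …)`.
Concatenating the list gives such a `Q`; conversely the `a - n - 1` arches of `Q` can be cut
into `n + 1` consecutive, possibly empty, groups in `C(a-1, a-n-1)` ways. -/

open DyckStep

def ofStep : DyckStep → Bool
  | U => true
  | D => false

lemma ofStep_injective : Function.Injective ofStep := by
  rintro (_ | _) (_ | _) h <;> first | rfl | cases h

def ofWord (w : DyckWord) : List Bool := w.toList.map ofStep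

lemma ofWord_injective : Function.Injective ofWord := fun _ _ h =>
  DyckWord.ext ((List.map_injective_iff.mpr ofStep_injective) h)

@[simp] lemma ofWord_add (w v : DyckWord) : ofWord (w + v) = ofWord w ++ ofWord v :=
  List.map_append ..

def arch (q : List Bool) : List Bool := true :: (q ++ [false])

@[simp] lemma ofWord_nest (w : DyckWord) : ofWord w.nest = arch (ofWord w) := by
  simp [ofWord, DyckWord.nest, arch, ofStep]

lemma sum_map_dstep_map_ofStep (l : List DyckStep) :
    ((l.map ofStep).map dstep).sum = l.count U - l.count D := by
  induction l with
  | nil => simp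
  | cons s l ih =>
    cases s <;> simp only [List.map_cons, List.sum_cons, ih, List.count_cons] <;>
      simp [ofStep, dstep] <;> ring

lemma isDyck_map_ofStep_iff (l : List DyckStep) :
    IsDyck (l.map ofStep) ↔
      l.count U = l.count D ∧ ∀ i, (l.take i).count D ≤ (l.take i).count U := by
  simp only [IsDyck, dheight, ← List.map_take, sum_map_dstep_map_ofStep, sub_eq_zero,
    sub_nonneg, Nat.cast_inj, Nat.cast_le]

lemma isDyck_ofWord (w : DyckWord) : IsDyck (ofWord w) :=
  (isDyck_map_ofStep_iff w.toList).2 ⟨w.count_U_eq_count_D, w.count_D_le_count_U⟩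

lemma exists_ofWord_eq {p : List Bool} (hp : IsDyck p) : ∃ w, ofWord w = p := by
  set l := p.map fun b => if b then U else D
  have hl : l.map ofStep = p := by
    rw [List.map_map]
    exact (List.map_congr_left fun b _ => by cases b <;> rfl).trans p.map_id
  rw [← hl, isDyck_map_ofStep_iff] at hp
  exact ⟨⟨l, hp.1, hp.2⟩, hl⟩

lemma isDyck_append {p q : List Bool} (hp : IsDyck p) (hq : IsDyck q) : IsDyck (p ++ q) := by
  obtain ⟨w, rfl⟩ := exists_ofWord_eq hp
  obtain ⟨v, rfl⟩ := exists_ofWord_eq hq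
  simpa using isDyck_ofWord (w + v)

lemma isDyck_arch {q : List Bool} (hq : IsDyck q) : IsDyck (arch q) := by
  obtain ⟨w, rfl⟩ := exists_ofWord_eq hq
  simpa using isDyck_ofWord w.nest

lemma exists_eq_arch_append {p : List Bool} (hp : IsDyck p) (hne : p ≠ []) :
    ∃ q r, IsDyck q ∧ IsDyck r ∧ p = arch q ++ r := by
  obtain ⟨w, rfl⟩ := exists_ofWord_eq hp
  have hw : w ≠ 0 := by rintro rfl; exact hne rfl
  refine ⟨_, _, isDyck_ofWord w.insidePart, isDyck_ofWord w.outsidePart, ?_⟩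
  rw [← ofWord_nest, ← ofWord_add, DyckWord.nest_insidePart_add_outsidePart hw]

lemma arch_append_inj {a b A B : List Bool} (ha : IsDyck a) (hb : IsDyck b) (hA : IsDyck A)
    (hB : IsDyck B) (h : arch a ++ A = arch b ++ B) : a = b ∧ A = B := by
  obtain ⟨wa, rfl⟩ := exists_ofWord_eq ha
  obtain ⟨wb, rfl⟩ := exists_ofWord_eq hb
  obtain ⟨wA, rfl⟩ := exists_ofWord_eq hA
  obtain ⟨wB, rfl⟩ := exists_ofWord_eq hB
  rw [← ofWord_nest, ← ofWord_nest, ← ofWord_add, ← ofWord_add] at h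
  have h := ofWord_injective h
  exact ⟨congrArg ofWord (by simpa using congrArg DyckWord.insidePart h),
    congrArg ofWord (by simpa using congrArg DyckWord.outsidePart h)⟩

def joinArches (L : List (List Bool)) : List Bool := (L.map arch).flatten

@[simp] lemma joinArches_nil : joinArches [] = [] := rfl

@[simp] lemma joinArches_cons (q : List Bool) (L : List (List Bool)) :
    joinArches (q :: L) = arch q ++ joinArches L := rfl

lemma joinArches_flatten (M : List (List (List Bool))) :
    joinArches M.flatten = (M.map joinArches).flatten := by
  simp only [joinArches, List.map_flatten, List.flatten_flatten, List.map_map]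
  rfl

lemma isDyck_nil : IsDyck [] := isDyck_ofWord 0

lemma isDyck_flatten {L : List (List Bool)} (hL : ∀ q ∈ L, IsDyck q) : IsDyck L.flatten := by
  induction L with
  | nil => exact isDyck_nil
  | cons q L ih =>
    simp only [List.mem_cons, forall_eq_or_imp] at hL
    exact isDyck_append hL.1 (ih hL.2)

lemma isDyck_joinArches {L : List (List Bool)} (hL : ∀ q ∈ L, IsDyck q) :
    IsDyck (joinArches L) :=
  isDyck_flatten (by simpa using fun q hq => isDyck_arch (hL q hq))

lemma exists_eq_joinArches {p : List Bool} (hp : IsDyck p) :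
    ∃ L, (∀ q ∈ L, IsDyck q) ∧ joinArches L = p := by
  induction h : p.length using Nat.strong_induction_on generalizing p with
  | _ N ih =>
    rcases eq_or_ne p [] with rfl | hne
    · exact ⟨[], by simp, rfl⟩
    obtain ⟨q, r, hq, hr, rfl⟩ := exists_eq_arch_append hp hne
    obtain ⟨L, hL, rfl⟩ := ih _ (by simp [← h, arch]; omega) hr rfl
    exact ⟨q :: L, by simpa using ⟨hq, hL⟩, rfl⟩

lemma joinArches_injOn : Set.InjOn joinArches {L | ∀ q ∈ L, IsDyck q} := by
  intro L hL M hM h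
  induction L generalizing M with
  | nil => cases M <;> simp_all [arch]
  | cons a L ih =>
    cases M with
    | nil => simp [arch] at h
    | cons b M =>
      simp only [Set.mem_ofPred_eq, List.mem_cons, forall_eq_or_imp] at hL hM
      obtain ⟨rfl, htail⟩ := arch_append_inj hL.1 hM.1 (isDyck_joinArches hL.2)
        (isDyck_joinArches hM.2) h
      rw [ih hL.2 hM.2 htail]

noncomputable def inners (p : List Bool) : List (List Bool) :=
  Function.invFunOn joinArches {L | ∀ q ∈ L, IsDyck q} p

lemma isDyck_of_mem_inners {p : List Bool} (hp : IsDyck p) : ∀ q ∈ inners p, IsDyck q :=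
  Function.invFunOn_mem (exists_eq_joinArches hp)

lemma joinArches_inners {p : List Bool} (hp : IsDyck p) : joinArches (inners p) = p :=
  Function.invFunOn_eq (exists_eq_joinArches hp)

lemma inners_joinArches {L : List (List Bool)} (hL : ∀ q ∈ L, IsDyck q) :
    inners (joinArches L) = L :=
  joinArches_injOn.leftInvOn_invFunOn hL

lemma inners_flatten {L : List (List Bool)} (hL : ∀ q ∈ L, IsDyck q) :
    inners L.flatten = (L.map inners).flatten := by
  have hinners : ∀ r ∈ (L.map inners).flatten, IsDyck r := by
    simpa using fun r q hq => isDyck_of_mem_inners (hL q hq) r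
  have hL' : (L.map inners).map joinArches = L := by
    rw [List.map_map]
    exact (List.map_congr_left fun q hq => joinArches_inners (hL q hq)).trans L.map_id
  rw [← inners_joinArches hinners, joinArches_flatten, hL']

def heights (p : List Bool) : List ℤ := (List.range (p.length + 1)).map (dheight p)

lemma feet_eq_count_heights (p : List Bool) (l : ℤ) : feet p l = (heights p).count l := rfl

@[simp] lemma heights_nil : heights [] = [0] := rfl

@[simp] lemma heights_cons (b : Bool) (p : List Bool) :
    heights (b :: p) = 0 :: (heights p).map (dstep b + ·) := by
  simp [heights, List.range_succ_eq_map, dheight, Function.comp_def]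

lemma heights_eq_zero_cons_tail (p : List Bool) : heights p = 0 :: (heights p).tail := by
  cases p <;> simp

lemma heights_append (p q : List Bool) :
    heights (p ++ q) = heights p ++ (heights q).tail.map ((p.map dstep).sum + ·) := by
  induction p with
  | nil => simpa using heights_eq_zero_cons_tail q
  | cons b p ih => simp [ih, Function.comp_def, add_assoc]

lemma heights_arch {q : List Bool} (hq : (q.map dstep).sum = 0) :
    heights (arch q) = 0 :: (heights q).map (1 + ·) ++ [0] := by
  simp [arch, heights_append, hq, dstep]

lemma zero_le_of_mem_heights {p : List Bool} (hp : IsDyck p) {h : ℤ} (hh : h ∈ heights p) :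
    0 ≤ h := by
  obtain ⟨k, -, rfl⟩ := List.mem_map.mp hh
  exact hp.2 k

lemma one_le_frame_zero (p : List Bool) : 1 ≤ frame p 0 := by
  rw [frame, feet_eq_count_heights, heights_eq_zero_cons_tail]
  simp

lemma frame_nil (k : ℕ) : frame [] k = if k = 0 then 1 else 0 := by
  cases k <;> simp [frame, feet_eq_count_heights, List.count_singleton']
  omega

lemma frame_append {p : List Bool} (hp : (p.map dstep).sum = 0) (q : List Bool) (k : ℕ) :
    frame (p ++ q) k + (if k = 0 then 1 else 0) = frame p k + frame q k := by
  simp only [frame, feet_eq_count_heights, heights_append, hp, zero_add, List.map_id_fun', id]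
  conv_rhs => rw [heights_eq_zero_cons_tail q]
  rw [List.count_append, List.count_cons]
  split_ifs <;> simp_all <;> omega

lemma frame_arch_zero {q : List Bool} (hq : IsDyck q) : frame (arch q) 0 = 2 := by
  have : (0 : ℤ) ∉ (heights q).map (1 + ·) := by
    simp only [List.mem_map, not_exists, not_and]
    intro h hh
    have := zero_le_of_mem_heights hq hh
    omega
  simp [frame, feet_eq_count_heights, heights_arch hq.1, List.count_eq_zero.mpr this]

lemma frame_arch_succ {q : List Bool} (hq : (q.map dstep).sum = 0) (j : ℕ) :
    frame (arch q) (j + 1) = frame q j := by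
  have hj : ((j + 1 : ℕ) : ℤ) = 1 + (j : ℤ) := by push_cast; ring
  rw [frame, feet_eq_count_heights, heights_arch hq, hj, List.count_append, List.count_cons,
    List.count_map_of_injective _ _ (add_right_injective 1)]
  simp [frame, feet_eq_count_heights, List.count_singleton']
  split_ifs <;> omega

lemma frame_flatten_zero {L : List (List Bool)} (hL : ∀ q ∈ L, IsDyck q) :
    frame L.flatten 0 + L.length = (L.map (frame · 0)).sum + 1 := by
  induction L with
  | nil => simp [frame_nil]
  | cons q L ih =>
    simp only [List.mem_cons, forall_eq_or_imp] at hL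
    have := frame_append hL.1.1 L.flatten 0
    simp only [List.flatten_cons, List.length_cons, List.map_cons, List.sum_cons] at this ⊢
    grind [ih hL.2]

lemma frame_flatten_succ {L : List (List Bool)} (hL : ∀ q ∈ L, IsDyck q) (j : ℕ) :
    frame L.flatten (j + 1) = (L.map (frame · (j + 1))).sum := by
  induction L with
  | nil => simp [frame_nil]
  | cons q L ih =>
    simp only [List.mem_cons, forall_eq_or_imp] at hL
    simpa [ih hL.2] using frame_append hL.1.1 L.flatten (j + 1)

lemma frame_joinArches_zero {L : List (List Bool)} (hL : ∀ q ∈ L, IsDyck q) :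
    frame (joinArches L) 0 = L.length + 1 := by
  have hA : ∀ a ∈ L.map arch, IsDyck a := by simpa using fun q hq => isDyck_arch (hL q hq)
  have h2 : (L.map arch).map (frame · 0) = L.map fun _ => 2 := by
    rw [List.map_map]
    exact List.map_congr_left fun q hq => frame_arch_zero (hL q hq)
  have h := frame_flatten_zero hA
  simp only [h2, List.map_const', List.sum_replicate, List.length_map, smul_eq_mul] at h
  unfold joinArches
  omega

lemma frame_joinArches_succ {L : List (List Bool)} (hL : ∀ q ∈ L, IsDyck q) (j : ℕ) :
    frame (joinArches L) (j + 1) = (L.map (frame · j)).sum := by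
  have hA : ∀ a ∈ L.map arch, IsDyck a := by simpa using fun q hq => isDyck_arch (hL q hq)
  rw [joinArches, frame_flatten_succ hA, List.map_map]
  exact congrArg List.sum (List.map_congr_left fun q hq => frame_arch_succ (hL q hq).1 j)

lemma frame_zero_eq_length_inners_add_one {p : List Bool} (hp : IsDyck p) :
    frame p 0 = (inners p).length + 1 := by
  conv_lhs => rw [← joinArches_inners hp]
  exact frame_joinArches_zero (isDyck_of_mem_inners hp)

def dyckWithFrame (X : ℕ → ℕ) : Set (List Bool) := {p | IsDyck p ∧ frame p = X}

def dyckListsWithFrameSum (k : ℕ) (W : ℕ → ℕ) : Set (List (List Bool)) :=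
  {L | (∀ q ∈ L, IsDyck q) ∧ L.length = k ∧ ∀ j, (L.map (frame · j)).sum = W j}

lemma frame_joinArches_eq_iff {L : List (List Bool)} (hL : ∀ q ∈ L, IsDyck q) {X : ℕ → ℕ}
    {k : ℕ} (hX : X 0 = k + 1) :
    frame (joinArches L) = X ↔ L.length = k ∧ ∀ j, (L.map (frame · j)).sum = X (j + 1) := by
  rw [funext_iff]
  constructor
  · intro h
    have h0 := h 0
    rw [frame_joinArches_zero hL, hX] at h0
    exact ⟨by omega, fun j => (frame_joinArches_succ hL j).symm.trans (h (j + 1))⟩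
  · rintro ⟨hk, hs⟩ (_ | j)
    · rw [frame_joinArches_zero hL, hX, hk]
    · rw [frame_joinArches_succ hL, hs]

lemma dyckWithFrame_eq_image {X : ℕ → ℕ} {k : ℕ} (hX : X 0 = k + 1) :
    dyckWithFrame X = joinArches '' dyckListsWithFrameSum k fun j => X (j + 1) := by
  ext p
  constructor
  · rintro ⟨hp, hpX⟩
    have hL := isDyck_of_mem_inners hp
    refine ⟨inners p, ⟨hL, ?_⟩, joinArches_inners hp⟩
    rwa [← frame_joinArches_eq_iff hL hX, joinArches_inners hp]
  · rintro ⟨L, ⟨hL, hLX⟩, rfl⟩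
    exact ⟨isDyck_joinArches hL, (frame_joinArches_eq_iff hL hX).2 hLX⟩

lemma ncard_dyckWithFrame {X : ℕ → ℕ} {k : ℕ} (hX : X 0 = k + 1) :
    (dyckWithFrame X).ncard = (dyckListsWithFrameSum k fun j => X (j + 1)).ncard := by
  rw [dyckWithFrame_eq_image hX, (joinArches_injOn.mono fun L hL => hL.1).ncard_image]

lemma dyckListsWithFrameSum_one (W : ℕ → ℕ) :
    dyckListsWithFrameSum 1 W = (fun Q => [Q]) '' dyckWithFrame W := by
  ext L
  constructor
  · rintro ⟨hL, hlen, hsum⟩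
    obtain ⟨Q, rfl⟩ := List.length_eq_one_iff.mp hlen
    exact ⟨Q, ⟨hL Q (by simp), funext fun j => by simpa using hsum j⟩, rfl⟩
  · rintro ⟨Q, ⟨hQ, rfl⟩, rfl⟩
    simp [dyckListsWithFrameSum, hQ]

lemma ncard_dyckWithFrame_of_zero_eq_two {Y : ℕ → ℕ} (hY : Y 0 = 2) :
    (dyckWithFrame Y).ncard = (dyckWithFrame fun j => Y (j + 1)).ncard := by
  rw [ncard_dyckWithFrame (k := 1) hY, dyckListsWithFrameSum_one,
    Set.ncard_image_of_injective _ List.singleton_injective]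

lemma List.subset_of_mem_splitLengths {α : Type*} {sz : List ℕ} {l S : List α}
    (hS : S ∈ sz.splitLengths l) : S ⊆ l := by
  induction sz generalizing l with
  | nil => simp at hS
  | cons k sz ih =>
    rw [List.splitLengths_cons, List.mem_cons] at hS
    rcases hS with rfl | hS
    · exact List.take_subset _ _
    · exact fun x hx => List.mem_of_mem_drop (ih hS hx)

lemma List.splitLengths_map_length_flatten {α : Type*} (M : List (List α)) :
    (M.map List.length).splitLengths M.flatten = M := by
  induction M with
  | nil => rfl
  | cons S M ih => simp [ih]

lemma ncard_compositions (k m : ℕ) :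
    {c : List ℕ | c.length = k ∧ c.sum = m}.ncard = (k + m - 1).choose m := by
  have himage : {c : List ℕ | c.length = k ∧ c.sum = m} =
      List.ofFn '' {f : Fin k → ℕ | ∑ i, f i = m} := by
    ext c
    constructor
    · rintro ⟨rfl, rfl⟩
      exact ⟨c.get, by simp [← List.sum_ofFn], List.ofFn_get c⟩
    · rintro ⟨f, hf, rfl⟩
      simpa [List.sum_ofFn] using hf
  rw [himage, Set.ncard_image_of_injective _ List.ofFn_injective, ← Nat.card_coe_set_eq]
  exact (Nat.card_congr (Sym.equivNatSumOfFintype (Fin k) m).symm).trans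
    (by rw [Sym.natCard_sym_eq_choose, Nat.card_fin])

noncomputable def groupArches (Q : List Bool) (c : List ℕ) : List (List Bool) :=
  (c.splitLengths (inners Q)).map joinArches

section groupArches

variable {Q : List Bool} {c : List ℕ}

lemma length_groupArches : (groupArches Q c).length = c.length := by simp [groupArches]

lemma isDyck_of_mem_groupArches (hQ : IsDyck Q) : ∀ q ∈ groupArches Q c, IsDyck q := by
  simp only [groupArches, List.mem_map]
  rintro _ ⟨S, hS, rfl⟩
  exact isDyck_joinArches fun r hr =>
    isDyck_of_mem_inners hQ r (List.subset_of_mem_splitLengths hS hr)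

lemma flatten_groupArches (hQ : IsDyck Q) (hc : c.sum = (inners Q).length) :
    (groupArches Q c).flatten = Q := by
  rw [groupArches, ← joinArches_flatten, List.flatten_splitLengths _ _ hc.ge,
    joinArches_inners hQ]

lemma map_length_inners_groupArches (hQ : IsDyck Q) (hc : c.sum = (inners Q).length) :
    (groupArches Q c).map (fun q => (inners q).length) = c := by
  rw [groupArches, List.map_map]
  refine (List.map_congr_left fun S hS => ?_).trans (List.map_splitLengths_length _ _ hc.le)
  simp only [Function.comp_apply]
  rw [inners_joinArches fun r hr =>
    isDyck_of_mem_inners hQ r (List.subset_of_mem_splitLengths hS hr)]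

end groupArches

lemma groupArches_flatten {L : List (List Bool)} (hL : ∀ q ∈ L, IsDyck q) :
    groupArches L.flatten (L.map fun q => (inners q).length) = L := by
  have hlengths : L.map (fun q => (inners q).length) = (L.map inners).map List.length := by
    simp [List.map_map, Function.comp_def]
  rw [groupArches, inners_flatten hL, hlengths, List.splitLengths_map_length_flatten,
    List.map_map]
  exact (List.map_congr_left fun q hq => joinArches_inners (hL q hq)).trans L.map_id

lemma ncard_dyckLists_flatten_mem {S : Set (List Bool)} {m : ℕ}
    (hS : ∀ Q ∈ S, IsDyck Q ∧ frame Q 0 = m + 1) (k : ℕ) :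
    {L : List (List Bool) | (∀ q ∈ L, IsDyck q) ∧ L.length = k ∧ L.flatten ∈ S}.ncard =
      S.ncard * (k + m - 1).choose m := by
  have hinners : ∀ Q ∈ S, IsDyck Q ∧ (inners Q).length = m := fun Q hQ => by
    obtain ⟨hQd, hQm⟩ := hS Q hQ
    have := frame_zero_eq_length_inners_add_one hQd
    exact ⟨hQd, by omega⟩
  have hbij : Set.BijOn (fun x : List Bool × List ℕ => groupArches x.1 x.2)
      (S ×ˢ {c | c.length = k ∧ c.sum = m})
      {L | (∀ q ∈ L, IsDyck q) ∧ L.length = k ∧ L.flatten ∈ S} := by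
    refine Set.InvOn.bijOn (f' := fun L => (L.flatten, L.map fun q => (inners q).length))
      ⟨?_, ?_⟩ ?_ ?_
    · rintro ⟨Q, c⟩ ⟨hQ, -, hsum⟩
      obtain ⟨hQd, hQm⟩ := hinners Q hQ
      exact Prod.ext (flatten_groupArches hQd (hsum.trans hQm.symm))
        (map_length_inners_groupArches hQd (hsum.trans hQm.symm))
    · rintro L ⟨hL, -, -⟩
      exact groupArches_flatten hL
    · rintro ⟨Q, c⟩ ⟨hQ, hlen, hsum⟩
      obtain ⟨hQd, hQm⟩ := hinners Q hQ
      refine ⟨isDyck_of_mem_groupArches hQd, length_groupArches.trans hlen, ?_⟩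
      rwa [flatten_groupArches hQd (hsum.trans hQm.symm)]
    · rintro L ⟨hL, hlen, hLS⟩
      refine ⟨hLS, by simp [hlen], ?_⟩
      rw [← (hinners _ hLS).2, inners_flatten hL, List.length_flatten, List.map_map]
      rfl
  rw [← hbij.image_eq, hbij.injOn.ncard_image, Set.ncard_prod, ncard_compositions]

lemma frame_flatten_eq_iff {L : List (List Bool)} (hL : ∀ q ∈ L, IsDyck q) {n : ℕ}
    (hn : L.length = n + 1) (W : ℕ → ℕ) :
    frame L.flatten = (fun j => if j = 0 then W 0 - n else W j) ↔
      ∀ j, (L.map (frame · j)).sum = W j := by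
  have h0 := frame_flatten_zero hL
  have hpos := one_le_frame_zero L.flatten
  rw [funext_iff]
  constructor
  · rintro h (_ | j)
    · have := h 0
      simp only [if_pos] at this
      omega
    · simpa [frame_flatten_succ hL] using h (j + 1)
  · rintro h (_ | j)
    · have := h 0
      simp only [if_pos]
      omega
    · simpa [frame_flatten_succ hL] using h (j + 1)

lemma ncard_dyckListsWithFrameSum (n : ℕ) (W : ℕ → ℕ) :
    (dyckListsWithFrameSum (n + 1) W).ncard =
      (dyckWithFrame fun j => if j = 0 then W 0 - n else W j).ncard *
        (W 0 - 1).choose (W 0 - n - 1) := by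
  set Z : ℕ → ℕ := fun j => if j = 0 then W 0 - n else W j
  have hset : dyckListsWithFrameSum (n + 1) W =
      {L | (∀ q ∈ L, IsDyck q) ∧ L.length = n + 1 ∧ L.flatten ∈ dyckWithFrame Z} := by
    ext L
    constructor
    · rintro ⟨hL, hn, hW⟩
      exact ⟨hL, hn, isDyck_flatten hL, (frame_flatten_eq_iff hL hn W).2 hW⟩
    · rintro ⟨hL, hn, -, hZ⟩
      exact ⟨hL, hn, (frame_flatten_eq_iff hL hn W).1 hZ⟩
  have hZ : ∀ Q ∈ dyckWithFrame Z, IsDyck Q ∧ frame Q 0 = W 0 - n - 1 + 1 := by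
    rintro Q ⟨hQ, hQZ⟩
    have hpos := one_le_frame_zero Q
    simp only [hQZ, Z, if_pos] at hpos ⊢
    exact ⟨hQ, by omega⟩
  rw [hset, ncard_dyckLists_flatten_mem hZ]
  rcases le_or_gt (n + 1) (W 0) with hW | hW
  · congr 2
    omega
  · simp [show W 0 - n - 1 = 0 by omega]

theorem stmt17_general (X : ℕ → ℕ) (n : ℕ) (h0 : X 0 = 2 + n)
    (Y : ℕ → ℕ) (hY : Y = fun k => if k = 0 then 2 else if k = 1 then X 1 - n else X k) :
    Set.ncard {p : List Bool | IsDyck p ∧ frame p = X} =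
      Set.ncard {p : List Bool | IsDyck p ∧ frame p = Y} *
        Nat.choose (X 1 - 1) (X 1 - n - 1) := by
  have hYsucc : (fun j => Y (j + 1)) = fun j => if j = 0 then X 1 - n else X (j + 1) := by
    subst hY
    funext j
    cases j <;> simp
  change (dyckWithFrame X).ncard = (dyckWithFrame Y).ncard * _
  rw [ncard_dyckWithFrame (k := n + 1) (by omega),
    ncard_dyckWithFrame_of_zero_eq_two (by simp [hY]), hYsucc, ncard_dyckListsWithFrameSum]

/-- The cardinality of an admissible frame X = (2+n, a, b, ...) equals the cardinality of its
right progenitor Y = (2, a-n, b, ...) times the binomial coefficient C(a-1, a-n-1). -/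
theorem stmt17 (X : ℕ → ℕ) (n : ℕ) (hX : Admissible X) (h0 : X 0 = 2 + n)
    (Y : ℕ → ℕ) (hY : Y = fun k => if k = 0 then 2 else if k = 1 then X 1 - n else X k) :
    Set.ncard {p : List Bool | IsDyck p ∧ frame p = X} =
      Set.ncard {p : List Bool | IsDyck p ∧ frame p = Y} *
        Nat.choose (X 1 - 1) (X 1 - n - 1) :=
  stmt17_general X n h0 Y hY
end
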